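/- For the triple integrator (d = 3), the diameter max_{‖η‖₂=1} 2μ ∫₀ᵗ |η₁ s²/2 + η₂ s + η₃| ds equals (μt/3) √(t⁴ + 9t² + 36), for μ, t > 0. -/

import Mathlib

/-!
Write the integrand as `|⟨η, φ s⟩|` with `φ s = (s²/2, s, 1)`. Every component of `φ` is
nonnegative on `[0, t]`, so `|⟨η, φ s⟩| ≤ ⟨|η|, φ s⟩`; integrating and applying Cauchy–Schwarz
bounds the integral by `‖m‖`, where `m = ∫₀ᵗ φ = (t³/6, t²/2, t)`. The direction `η = m / ‖m‖`
makes `⟨η, φ s⟩` nonnegative, so there the bound is attained, and `‖m‖ = (t/6) √(t⁴ + 9t² + 36)`.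
-/

open intervalIntegral MeasureTheory

noncomputable def integralVec {ι : Type*} (φ : ι → ℝ → ℝ) (a b : ℝ) : EuclideanSpace ℝ ι :=
  WithLp.toLp 2 fun i => ∫ s in a..b, φ i s

@[simp]
lemma integralVec_apply {ι : Type*} (φ : ι → ℝ → ℝ) (a b : ℝ) (i : ι) :
    integralVec φ a b i = ∫ s in a..b, φ i s := rfl

section NonnegComponents

variable {ι : Type*} [Fintype ι] {φ : ι → ℝ → ℝ} {a b : ℝ} (hab : a ≤ b) (hφ : ∀ i, IntervalIntegrable (φ i) volume a b)
  (hφ0 : ∀ i, ∀ s ∈ Set.Icc a b, 0 ≤ φ i s)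
include hab hφ hφ0

lemma integral_abs_sum_mul_le (η : EuclideanSpace ℝ ι) :
    ∫ s in a..b, |∑ i, η i * φ i s| ≤ ‖η‖ * ‖integralVec φ a b‖ := by
  have hsum (c : ι → ℝ) : IntervalIntegrable (fun s => ∑ i, c i * φ i s) volume a b := by
    simpa only [Finset.sum_fn] using
      IntervalIntegrable.sum Finset.univ fun i _ => (hφ i).const_mul (c i)
  calc ∫ s in a..b, |∑ i, η i * φ i s|
      ≤ ∫ s in a..b, ∑ i, |η i| * φ i s := by
        refine integral_mono_on hab (hsum η).abs (hsum fun i => |η i|) fun s hs => ?_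
        refine (Finset.abs_sum_le_sum_abs _ _).trans_eq (Finset.sum_congr rfl fun i _ => ?_)
        rw [abs_mul, abs_of_nonneg (hφ0 i s hs)]
    _ = ∑ i, |η i| * integralVec φ a b i := by
        rw [integral_finsetSum fun i _ => (hφ i).const_mul _]
        simp only [intervalIntegral.integral_const_mul, integralVec_apply]
    _ ≤ ‖η‖ * ‖integralVec φ a b‖ := by
        simpa only [EuclideanSpace.norm_eq, Real.norm_eq_abs, sq_abs] using
          Real.sum_mul_le_sqrt_mul_sqrt Finset.univ (fun i => |η i|) (integralVec φ a b)

lemma integral_abs_sum_integralVec_mul :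
    ∫ s in a..b, |∑ i, integralVec φ a b i * φ i s| = ‖integralVec φ a b‖ ^ 2 := by
  have hm (i : ι) : 0 ≤ integralVec φ a b i := integral_nonneg hab (hφ0 i)
  have habs : Set.EqOn (fun s => |∑ i, integralVec φ a b i * φ i s|)
      (fun s => ∑ i, integralVec φ a b i * φ i s) (Set.uIcc a b) := by
    intro s hs
    rw [Set.uIcc_of_le hab] at hs
    exact abs_of_nonneg (Finset.sum_nonneg fun i _ => mul_nonneg (hm i) (hφ0 i s hs))
  rw [integral_congr habs, integral_finsetSum fun i _ => (hφ i).const_mul _,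
    EuclideanSpace.norm_sq_eq]
  simp only [Real.norm_eq_abs, sq_abs]
  simp only [intervalIntegral.integral_const_mul, integralVec_apply, sq]

lemma exists_norm_eq_one_integral_abs_sum_mul_eq (hm : integralVec φ a b ≠ 0) :
    ∃ η : EuclideanSpace ℝ ι, ‖η‖ = 1 ∧
      ∫ s in a..b, |∑ i, η i * φ i s| = ‖integralVec φ a b‖ := by
  refine ⟨‖integralVec φ a b‖⁻¹ • integralVec φ a b, norm_smul_inv_norm hm, ?_⟩
  have hpos : 0 < ‖integralVec φ a b‖ := norm_pos_iff.mpr hm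
  simp only [PiLp.smul_apply, smul_eq_mul, mul_assoc, ← Finset.mul_sum, abs_mul,
    abs_of_pos (inv_pos.mpr hpos), intervalIntegral.integral_const_mul,
    integral_abs_sum_integralVec_mul hab hφ hφ0]
  field_simp

end NonnegComponents

noncomputable def tripleIntegratorCurve : Fin 3 → ℝ → ℝ :=
  ![fun s => s ^ 2 / 2, fun s => s, fun _ => 1]

lemma sum_mul_tripleIntegratorCurve (η : EuclideanSpace ℝ (Fin 3)) (s : ℝ) :
    ∑ i, η i * tripleIntegratorCurve i s = η 0 * (s ^ 2 / 2) + η 1 * s + η 2 := by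
  simp [Fin.sum_univ_three, tripleIntegratorCurve]

lemma integralVec_tripleIntegratorCurve (t : ℝ) :
    integralVec tripleIntegratorCurve 0 t = !₂[t ^ 3 / 6, t ^ 2 / 2, t] := by
  ext i
  fin_cases i <;> norm_num [tripleIntegratorCurve, div_div]

lemma norm_integralVec_tripleIntegratorCurve {t : ℝ} (ht : 0 ≤ t) :
    ‖integralVec tripleIntegratorCurve 0 t‖ = t / 6 * √(t ^ 4 + 9 * t ^ 2 + 36) := by
  rw [integralVec_tripleIntegratorCurve, EuclideanSpace.norm_eq, Fin.sum_univ_three]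
  simp only [Real.norm_eq_abs, sq_abs, Matrix.cons_val_zero, Matrix.cons_val_one, Matrix.cons_val]
  rw [← Real.sqrt_sq (by positivity : 0 ≤ t / 6), ← Real.sqrt_mul (by positivity)]
  ring_nf

lemma continuous_tripleIntegratorCurve (i : Fin 3) : Continuous (tripleIntegratorCurve i) := by
  fin_cases i <;> simp [tripleIntegratorCurve] <;> fun_prop

lemma tripleIntegratorCurve_nonneg (i : Fin 3) {s : ℝ} (hs : 0 ≤ s) :
    0 ≤ tripleIntegratorCurve i s := by
  fin_cases i <;> simp [tripleIntegratorCurve, hs, div_nonneg]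

theorem triple_integrator_diameter (μ t : ℝ) (hμ : 0 < μ) (ht : 0 < t) :
    IsGreatest
      {x : ℝ | ∃ η : EuclideanSpace ℝ (Fin 3), ‖η‖ = 1 ∧
        x = 2 * μ * ∫ s in (0:ℝ)..t, |η 0 * (s ^ 2 / 2) + η 1 * s + η 2|}
      ((μ * t / 3) * Real.sqrt (t ^ 4 + 9 * t ^ 2 + 36)) := by
  have hφ (i : Fin 3) : IntervalIntegrable (tripleIntegratorCurve i) volume 0 t :=
    (continuous_tripleIntegratorCurve i).intervalIntegrable 0 t
  have hφ0 (i : Fin 3) (s : ℝ) (hs : s ∈ Set.Icc 0 t) := tripleIntegratorCurve_nonneg i hs.1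
  have hnorm := norm_integralVec_tripleIntegratorCurve ht.le
  have hne : integralVec tripleIntegratorCurve 0 t ≠ 0 := by
    rw [← norm_pos_iff, hnorm]; positivity
  simp_rw [← sum_mul_tripleIntegratorCurve]
  constructor
  · obtain ⟨η, hη, hη_eq⟩ := exists_norm_eq_one_integral_abs_sum_mul_eq ht.le hφ hφ0 hne
    exact ⟨η, hη, by rw [hη_eq, hnorm]; ring⟩
  · rintro x ⟨η, hη, rfl⟩
    have hle := integral_abs_sum_mul_le ht.le hφ hφ0 η
    rw [hη, one_mul, hnorm] at hle
    calc 2 * μ * ∫ s in (0:ℝ)..t, |∑ i, η i * tripleIntegratorCurve i s|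
        ≤ 2 * μ * (t / 6 * √(t ^ 4 + 9 * t ^ 2 + 36)) := by gcongr
      _ = μ * t / 3 * √(t ^ 4 + 9 * t ^ 2 + 36) := by ring
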